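/- arXiv:1507.07860 — 3 statements merged into one kernel-verified Lean document; each statement's English description precedes it below -/
import Mathlib

section
/- Let A be an n×n irreducible nonnegative real matrix with period p and spectral radius ρ(A). If λ is a complex eigenvalue of A with |λ| = ρ(A), then λ = ρ(A)·e^{iπk/p} for some integer k with 0 ≤ k ≤ 2p−1. -/
/-!
Let `A x = λ x` with `x ≠ 0` and `‖λ‖ = ρ(A) =: ρ`, and put `z = |x|`. The triangle inequality gives
`ρ z ≤ A z`. For an irreducible nonnegative `A` this forces `A z = ρ z` and `z > 0`: otherwise a
positive combination of powers of `A` produces a positive vector that `A` stretches by more than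
`ρ`, which Gelfand's formula forbids. Equality in the triangle inequality then says that the phases
`x i / |x i|` are multiplied by `η = λ / ρ` along every arc of the digraph, so `η ^ k = 1` for the
length `k` of every closed walk, hence `η ^ p = 1`, i.e. `η = exp (2 π i l / p)` with `l < p`.
-/

open Matrix

/-- The spectrum of a real square matrix: the multiset of complex roots of its
characteristic polynomial (eigenvalues with multiplicity). -/
noncomputable def spec {ι : Type*} [Fintype ι] [DecidableEq ι] (M : Matrix ι ι ℝ) : Multiset ℂ :=
  (M.map Complex.ofReal).charpoly.roots

/-- The spectral radius: the maximum of the moduli of the complex eigenvalues. -/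
noncomputable def specRadius {ι : Type*} [Fintype ι] [DecidableEq ι] (M : Matrix ι ι ℝ) : ℝ :=
  sSup ((fun z : ℂ => ‖z‖) '' {z | z ∈ spec M})

/-- Entrywise absolute value of a real matrix. -/
def matAbs {ι : Type*} (M : Matrix ι ι ℝ) : Matrix ι ι ℝ := fun i j => |M i j|

/-- A walk of length `k` from `i` to `j` in the digraph of `A`
(arcs are the pairs with nonzero entry). -/
def HasWalk {ι : Type*} (A : Matrix ι ι ℝ) (i j : ι) (k : ℕ) : Prop :=
  ∃ f : ℕ → ι, f 0 = i ∧ f k = j ∧ ∀ t < k, A (f t) (f (t + 1)) ≠ 0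

/-- `A` is irreducible: its digraph is strongly connected. -/
def MatIrreducible {ι : Type*} (A : Matrix ι ι ℝ) : Prop :=
  ∀ i j : ι, ∃ k, HasWalk A i j k

/-- `p` is the period of `A`: the gcd of the lengths of the closed walks of its digraph. -/
def IsPeriod {ι : Type*} (A : Matrix ι ι ℝ) (p : ℕ) : Prop :=
  (∀ k, 0 < k → (∃ i, HasWalk A i i k) → p ∣ k) ∧
  ∀ q : ℕ, (∀ k, 0 < k → (∃ i, HasWalk A i i k) → q ∣ k) → q ∣ p

/-- `B'` is `{-1,1}`-diagonally similar to `B`: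
`B' = Λ⁻¹ * B * Λ` for a diagonal matrix `Λ` with diagonal entries in `{-1,1}`. -/
def DiagSignSimilar {ι : Type*} [Fintype ι] [DecidableEq ι] (B B' : Matrix ι ι ℝ) : Prop :=
  ∃ d : ι → ℝ, (∀ i, d i = 1 ∨ d i = -1) ∧
    B' = (Matrix.diagonal d)⁻¹ * B * Matrix.diagonal d

open Filter Topology

lemma spectrum.ofReal_le_spectralRadius_of_le_norm_pow {𝔸 : Type*} [NormedRing 𝔸]
    [NormedAlgebra ℂ 𝔸] [CompleteSpace 𝔸] (a : 𝔸) {c r : ℝ} (hc : 0 < c) (hr : 0 ≤ r)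
    (h : ∀ k : ℕ, c * r ^ k ≤ ‖a ^ k‖) : ENNReal.ofReal r ≤ spectralRadius ℂ a := by
  have hroot : Tendsto (fun k : ℕ => c ^ (1 / k : ℝ) * r) atTop (𝓝 r) := by
    simpa using ((Real.continuousAt_const_rpow hc.ne' (b := 0)).tendsto.comp
      tendsto_one_div_atTop_nhds_zero_nat).mul_const r
  refine le_of_tendsto_of_tendsto (ENNReal.tendsto_ofReal hroot)
    (spectrum.pow_norm_pow_one_div_tendsto_nhds_spectralRadius a) ?_
  filter_upwards [eventually_ne_atTop 0] with k hk
  refine ENNReal.ofReal_le_ofReal ?_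
  calc c ^ (1 / k : ℝ) * r = (c * r ^ k) ^ (1 / k : ℝ) := by
        rw [Real.mul_rpow hc.le (by positivity), one_div, Real.pow_rpow_inv_natCast hr hk]
    _ ≤ ‖a ^ k‖ ^ (1 / k : ℝ) := by gcongr; exact h k

open scoped ComplexOrder in
lemma Complex.mul_norm_sum_eq_of_sum_norm_le {α : Type*} {s : Finset α} {a : α → ℂ}
    (h : ∑ l ∈ s, ‖a l‖ ≤ ‖∑ l ∈ s, a l‖) {j : α} (hj : j ∈ s) :
    a j * ‖∑ l ∈ s, a l‖ = ‖a j‖ * ∑ l ∈ s, a l := by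
  set w := ∑ l ∈ s, a l
  rcases eq_or_ne w 0 with hw | hw
  · simp [hw]
  have hle : ∀ l ∈ s, (starRingEnd ℂ w * a l).re ≤ ‖starRingEnd ℂ w * a l‖ :=
    fun l _ => Complex.re_le_norm _
  have hge : ∑ l ∈ s, ‖starRingEnd ℂ w * a l‖ ≤ ∑ l ∈ s, (starRingEnd ℂ w * a l).re := by
    calc ∑ l ∈ s, ‖starRingEnd ℂ w * a l‖ = ‖w‖ * ∑ l ∈ s, ‖a l‖ := by
          simp [Finset.mul_sum]
      _ ≤ ‖w‖ * ‖w‖ := by gcongr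
      _ = ∑ l ∈ s, (starRingEnd ℂ w * a l).re := by
          rw [← Complex.re_sum, ← Finset.mul_sum, Complex.conj_mul']
          norm_cast; ring
  -- equality in the triangle inequality forces every `conj w * a l` onto the positive real axis
  have hj' : 0 ≤ starRingEnd ℂ w * a j := Complex.re_eq_norm.1
    ((Finset.sum_eq_sum_iff_of_le hle).1 (le_antisymm (Finset.sum_le_sum hle) hge) j hj)
  have key : starRingEnd ℂ w * a j = ‖w‖ * ‖a j‖ := by
    rw [Complex.eq_coe_norm_of_nonneg hj']; simp
  have hwC : (‖w‖ : ℂ) ≠ 0 := by exact_mod_cast norm_ne_zero_iff.2 hw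
  apply mul_left_cancel₀ hwC
  calc (‖w‖ : ℂ) * (a j * ‖w‖) = w * (starRingEnd ℂ w * a j) := by
        rw [← mul_assoc w, Complex.mul_conj']; ring
    _ = ‖w‖ * (‖a j‖ * w) := by rw [key]; ring

lemma exists_pos_smul_le {ι : Type*} [Finite ι] {u v : ι → ℝ} (hu : ∀ i, 0 < u i)
    (hv : ∀ i, 0 < v i) : ∃ ε : ℝ, 0 < ε ∧ ε • u ≤ v := by
  cases isEmpty_or_nonempty ι
  · exact ⟨1, one_pos, fun i => isEmptyElim i⟩
  obtain ⟨i₀, hi₀⟩ := Finite.exists_min fun i => v i / u i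
  exact ⟨v i₀ / u i₀, div_pos (hv i₀) (hu i₀), fun i => (le_div_iff₀ (hu i)).1 (hi₀ i)⟩

namespace Matrix

lemma pow_mulVec_of_mulVec_eq_smul {ι R : Type*} [Fintype ι] [DecidableEq ι] [CommSemiring R]
    {A : Matrix ι ι R} {z : ι → R} {c : R} (h : A *ᵥ z = c • z) (k : ℕ) :
    A ^ k *ᵥ z = c ^ k • z := by
  induction k with
  | zero => simp
  | succ k ih => rw [pow_succ', ← mulVec_mulVec, ih, mulVec_smul, h, smul_smul, pow_succ]

variable {ι : Type*} [Fintype ι] {A : Matrix ι ι ℝ}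

lemma mulVec_mono_of_nonneg (hA : ∀ i j, 0 ≤ A i j) {v w : ι → ℝ} (h : v ≤ w) :
    A *ᵥ v ≤ A *ᵥ w :=
  fun i => Finset.sum_le_sum fun j _ => mul_le_mul_of_nonneg_left (h j) (hA i j)

lemma mulVec_pos_of_pos (hA : ∀ i j, 0 < A i j) {z : ι → ℝ} (hz : 0 ≤ z) (hz0 : z ≠ 0)
    (i : ι) : 0 < (A *ᵥ z) i := by
  obtain ⟨j, hj⟩ := Function.ne_iff.1 hz0
  exact Finset.sum_pos' (fun l _ => mul_nonneg (hA i l).le (hz l))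
    ⟨j, Finset.mem_univ _, mul_pos (hA i j) ((hz j).lt_of_ne' hj)⟩

lemma norm_smul_le_mulVec_norm (hA : ∀ i j, 0 ≤ A i j) {x : ι → ℂ} {μ : ℂ}
    (hx : A.map ((↑) : ℝ → ℂ) *ᵥ x = μ • x) :
    ‖μ‖ • (fun i => ‖x i‖) ≤ A *ᵥ fun i => ‖x i‖ := fun i =>
  calc ‖μ‖ * ‖x i‖ = ‖∑ j, (A i j : ℂ) * x j‖ := by
        rw [← norm_mul, ← smul_eq_mul, ← Pi.smul_apply, ← hx]; rfl
    _ ≤ ∑ j, ‖(A i j : ℂ) * x j‖ := norm_sum_le _ _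
    _ = ∑ j, A i j * ‖x j‖ := by simp [abs_of_nonneg (hA i _)]

lemma mul_norm_eq_of_mulVec_norm_eq (hA : ∀ i j, 0 ≤ A i j) {x : ι → ℂ} {μ : ℂ}
    (hx : A.map ((↑) : ℝ → ℂ) *ᵥ x = μ • x)
    (hz : A *ᵥ (fun i => ‖x i‖) = ‖μ‖ • fun i => ‖x i‖) {i j : ι} (hij : A i j ≠ 0) :
    x j * (‖μ‖ * ‖x i‖) = ‖x j‖ * (μ * x i) := by
  have hsum : ∑ l, (A i l : ℂ) * x l = μ * x i := congrFun hx i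
  have hnorm : ∑ l, ‖(A i l : ℂ) * x l‖ = ‖μ‖ * ‖x i‖ := by
    have := congrFun hz i
    simp only [mulVec, dotProduct, Pi.smul_apply, smul_eq_mul] at this
    simp [← this, abs_of_nonneg (hA i _)]
  have := Complex.mul_norm_sum_eq_of_sum_norm_le (s := Finset.univ)
    (a := fun l => (A i l : ℂ) * x l) (by rw [hsum, hnorm, norm_mul]) (Finset.mem_univ j)
  simp only [hsum, norm_mul, Complex.norm_real, Real.norm_eq_abs, abs_of_nonneg (hA i j)] at this
  apply mul_left_cancel₀ (Complex.ofReal_ne_zero.2 hij)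
  push_cast at this ⊢
  linear_combination this

variable [DecidableEq ι]

lemma pow_smul_le_pow_mulVec (hA : ∀ i j, 0 ≤ A i j) {r : ℝ} (hr : 0 ≤ r) {w : ι → ℝ}
    (h : r • w ≤ A *ᵥ w) (k : ℕ) : r ^ k • w ≤ (A ^ k) *ᵥ w := by
  induction k with
  | zero => simp
  | succ k ih =>
    calc r ^ (k + 1) • w = r • (r ^ k • w) := by rw [pow_succ', mul_smul]
      _ ≤ r • (A ^ k *ᵥ w) := smul_le_smul_of_nonneg_left ih hr
      _ = A ^ k *ᵥ (r • w) := (mulVec_smul _ _ _).symm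
      _ ≤ A ^ k *ᵥ (A *ᵥ w) := mulVec_mono_of_nonneg (pow_apply_nonneg hA k) h
      _ = A ^ (k + 1) *ᵥ w := by rw [mulVec_mulVec, pow_succ]

lemma ofReal_le_spectralRadius_of_smul_le_mulVec (hA : ∀ i j, 0 ≤ A i j) {r : ℝ} (hr : 0 ≤ r)
    {w : ι → ℝ} {i : ι} (hwi : 0 < w i) (h : r • w ≤ A *ᵥ w) :
    ENNReal.ofReal r ≤ spectralRadius ℂ (A.map ((↑) : ℝ → ℂ)) := by
  -- `spectralRadius` does not depend on the norm; this one only makes Gelfand's formula available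
  let := Matrix.linftyOpNormedRing (n := ι) (α := ℂ)
  let := Matrix.linftyOpNormedAlgebra (n := ι) (α := ℂ) (R := ℂ)
  have : CompleteSpace (Matrix ι ι ℂ) := FiniteDimensional.complete ℂ _
  set B := A.map ((↑) : ℝ → ℂ)
  set w' : ι → ℂ := fun j => w j
  have hw' : 0 < ‖w'‖ := norm_pos_iff.2 (Function.ne_iff.2 ⟨i, by simp [w', hwi.ne']⟩)
  refine spectrum.ofReal_le_spectralRadius_of_le_norm_pow _ (div_pos hwi hw') hr fun k => ?_
  have hcoord : (B ^ k *ᵥ w') i = ((A ^ k *ᵥ w) i : ℂ) := by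
    have := RingHom.map_mulVec Complex.ofRealHom (A ^ k) w i
    rw [Matrix.map_pow] at this
    exact this.symm
  calc w i / ‖w'‖ * r ^ k = (r ^ k • w) i / ‖w'‖ := by
        simp only [Pi.smul_apply, smul_eq_mul]; ring
    _ ≤ ‖(B ^ k *ᵥ w') i‖ / ‖w'‖ := by
        rw [hcoord, Complex.norm_real, Real.norm_eq_abs]
        gcongr
        exact (pow_smul_le_pow_mulVec hA hr h k i).trans (le_abs_self _)
    _ ≤ ‖B ^ k *ᵥ w'‖ / ‖w'‖ := by gcongr; exact norm_le_pi_norm _ i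
    _ ≤ ‖B ^ k‖ := div_le_of_le_mul₀ hw'.le (norm_nonneg _) (linfty_opNorm_mulVec _ _)

end Matrix

section Walks

variable {ι : Type*} {A : Matrix ι ι ℝ} {i j : ι} {k : ℕ}

lemma hasWalk_zero_iff : HasWalk A i j 0 ↔ i = j :=
  ⟨fun ⟨f, h0, h1, _⟩ => h0.symm.trans h1, fun h => ⟨fun _ => j, h.symm, rfl, by simp⟩⟩

lemma hasWalk_succ_iff : HasWalk A i j (k + 1) ↔ ∃ l, A i l ≠ 0 ∧ HasWalk A l j k := by
  constructor
  · rintro ⟨f, h0, hk, harc⟩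
    exact ⟨f 1, h0 ▸ harc 0 k.succ_pos, fun t => f (t + 1), rfl, hk,
      fun t ht => harc (t + 1) (by omega)⟩
  · rintro ⟨l, hil, f, h0, hk, harc⟩
    refine ⟨fun t => Nat.casesOn t i f, rfl, hk, fun t ht => ?_⟩
    cases t with
    | zero => simpa [h0] using hil
    | succ t => exact harc t (by omega)

lemma HasWalk.eq_pow_mul {M : Type*} [Monoid M] {φ : ι → M} {η : M}
    (hφ : ∀ i j, A i j ≠ 0 → φ j = η * φ i) (h : HasWalk A i j k) : φ j = η ^ k * φ i := by
  induction k generalizing i with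
  | zero => simp [hasWalk_zero_iff.1 h]
  | succ k ih =>
    obtain ⟨l, hil, hl⟩ := hasWalk_succ_iff.1 h
    rw [ih hl, hφ i l hil, pow_succ, mul_assoc]

variable [Fintype ι] [DecidableEq ι]

lemma HasWalk.pow_apply_pos (hA : ∀ i j, 0 ≤ A i j) (h : HasWalk A i j k) :
    0 < (A ^ k) i j := by
  induction k generalizing i with
  | zero => simp [hasWalk_zero_iff.1 h]
  | succ k ih =>
    obtain ⟨l, hil, hl⟩ := hasWalk_succ_iff.1 h
    rw [pow_succ', Matrix.mul_apply]
    exact Finset.sum_pos' (fun m _ => mul_nonneg (hA i m) (Matrix.pow_apply_nonneg hA k m j))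
      ⟨l, Finset.mem_univ _, mul_pos ((hA i l).lt_of_ne' hil) (ih hl)⟩

end Walks

namespace MatIrreducible

variable {ι : Type*} {A : Matrix ι ι ℝ}

lemma exists_hasWalk_self (hirr : MatIrreducible A) {i j : ι} (hij : A i j ≠ 0) :
    ∃ k, HasWalk A i i (k + 1) :=
  (hirr j i).imp fun _ hk => hasWalk_succ_iff.2 ⟨j, hij, hk⟩

variable [Fintype ι] [DecidableEq ι]

lemma exists_sum_pow_pos (hirr : MatIrreducible A) (hA : ∀ i j, 0 ≤ A i j) :
    ∃ N, ∀ i j, 0 < (∑ k ∈ Finset.range N, A ^ k) i j := by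
  choose K hK using hirr
  refine ⟨Finset.univ.sup (fun ij : ι × ι => K ij.1 ij.2) + 1, fun i j => ?_⟩
  rw [Matrix.sum_apply]
  refine ((hK i j).pow_apply_pos hA).trans_le (Finset.single_le_sum
    (f := fun k => (A ^ k) i j) (fun k _ => Matrix.pow_apply_nonneg hA k i j) ?_)
  exact Finset.mem_range_succ_iff.2
    (Finset.le_sup (f := fun ij : ι × ι => K ij.1 ij.2) (Finset.mem_univ (i, j)))

end MatIrreducible

lemma IsPeriod.pos {ι : Type*} {A : Matrix ι ι ℝ} {p k : ℕ} (hp : IsPeriod A p) {i : ι}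
    (hk : HasWalk A i i (k + 1)) : 0 < p :=
  Nat.pos_of_ne_zero fun h => by simpa [h] using hp.1 (k + 1) k.succ_pos ⟨i, hk⟩

section Spectrum

variable {ι : Type*} [Fintype ι] [DecidableEq ι] {M : Matrix ι ι ℝ} {z : ℂ}

lemma mem_spec_iff : z ∈ spec M ↔ z ∈ spectrum ℂ (M.map ((↑) : ℝ → ℂ)) := by
  rw [spec, Polynomial.mem_roots (Matrix.charpoly_monic _).ne_zero,
    Matrix.mem_spectrum_iff_isRoot_charpoly]

lemma norm_le_specRadius (hz : z ∈ spec M) : ‖z‖ ≤ specRadius M :=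
  le_csSup ((spec M).finite_toSet.image _).bddAbove ⟨z, hz, rfl⟩

lemma spectralRadius_le_specRadius (M : Matrix ι ι ℝ) :
    spectralRadius ℂ (M.map ((↑) : ℝ → ℂ)) ≤ ENNReal.ofReal (specRadius M) :=
  iSup₂_le fun z hz => by
    rw [← enorm_eq_nnnorm, ← ofReal_norm]
    exact ENNReal.ofReal_le_ofReal (norm_le_specRadius (mem_spec_iff.2 hz))

lemma exists_mulVec_eq_smul_of_mem_spec (hz : z ∈ spec M) :
    ∃ x ≠ 0, M.map ((↑) : ℝ → ℂ) *ᵥ x = z • x := by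
  rw [mem_spec_iff, ← Matrix.spectrum_toLin', ← Module.End.hasEigenvalue_iff_mem_spectrum] at hz
  obtain ⟨x, hx⟩ := hz.exists_hasEigenvector
  exact ⟨x, hx.2, by simpa using Module.End.mem_eigenspace_iff.1 hx.1⟩

end Spectrum

namespace MatIrreducible

variable {ι : Type*} [Fintype ι] [DecidableEq ι] {A : Matrix ι ι ℝ}

lemma mulVec_eq_smul_of_smul_le_mulVec (hirr : MatIrreducible A) (hA : ∀ i j, 0 ≤ A i j)
    {ρ : ℝ} (hρ : 0 ≤ ρ)
    (hsr : spectralRadius ℂ (A.map ((↑) : ℝ → ℂ)) ≤ ENNReal.ofReal ρ)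
    {z : ι → ℝ} (hz : 0 ≤ z) (hz0 : z ≠ 0) (h : ρ • z ≤ A *ᵥ z) : A *ᵥ z = ρ • z := by
  by_contra hne
  -- then `S *ᵥ z` is positive for the positive matrix `S` below, and `A` stretches it beyond `ρ`
  obtain ⟨N, hN⟩ := hirr.exists_sum_pow_pos hA
  set S := ∑ k ∈ Finset.range N, A ^ k
  set y := A *ᵥ z - ρ • z
  have hu := Matrix.mulVec_pos_of_pos hN hz hz0
  have hv := Matrix.mulVec_pos_of_pos hN (sub_nonneg.2 h) (sub_ne_zero.2 hne)
  have hAS : A * S = S * A := (Commute.sum_right _ _ _ fun k _ => Commute.self_pow A k).eq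
  have hAu : A *ᵥ (S *ᵥ z) = ρ • (S *ᵥ z) + S *ᵥ y := by
    rw [Matrix.mulVec_mulVec, hAS, ← Matrix.mulVec_mulVec, ← Matrix.mulVec_smul,
      ← Matrix.mulVec_add, add_sub_cancel]
  obtain ⟨ε, hε, hεle⟩ := exists_pos_smul_le hu hv
  obtain ⟨i, -⟩ := Function.ne_iff.1 hz0
  have hle := Matrix.ofReal_le_spectralRadius_of_smul_le_mulVec hA (r := ρ + ε) (by positivity)
    (hu i) (by rw [hAu, add_smul]; exact add_le_add le_rfl hεle)
  have := (ENNReal.ofReal_le_ofReal_iff hρ).1 (hle.trans hsr)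
  linarith

lemma pos_of_mulVec_eq_smul (hirr : MatIrreducible A) (hA : ∀ i j, 0 ≤ A i j) {ρ : ℝ}
    (hρ : 0 ≤ ρ) {z : ι → ℝ} (hz : 0 ≤ z) (hz0 : z ≠ 0) (h : A *ᵥ z = ρ • z) (i : ι) :
    0 < z i := by
  obtain ⟨N, hN⟩ := hirr.exists_sum_pow_pos hA
  have hS : (∑ k ∈ Finset.range N, A ^ k) *ᵥ z = (∑ k ∈ Finset.range N, ρ ^ k) • z := by
    simp only [Matrix.sum_mulVec, Finset.sum_smul, Matrix.pow_mulVec_of_mulVec_eq_smul h]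
  have := Matrix.mulVec_pos_of_pos hN hz hz0 i
  rw [hS, Pi.smul_apply, smul_eq_mul] at this
  exact pos_of_mul_pos_right this (Finset.sum_nonneg fun k _ => pow_nonneg hρ k)

theorem pow_eq_one_of_hasWalk (hirr : MatIrreducible A) (hA : ∀ i j, 0 ≤ A i j)
    {x : ι → ℂ} {μ : ℂ} (hμ : μ ≠ 0) (hx0 : x ≠ 0) (hx : A.map ((↑) : ℝ → ℂ) *ᵥ x = μ • x)
    (hsr : spectralRadius ℂ (A.map ((↑) : ℝ → ℂ)) ≤ ENNReal.ofReal ‖μ‖) {i : ι} {k : ℕ}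
    (hk : HasWalk A i i k) : (μ / ‖μ‖) ^ k = 1 := by
  set z : ι → ℝ := fun i => ‖x i‖
  have hz : 0 ≤ z := fun i => norm_nonneg _
  have hz0 : z ≠ 0 := fun h => hx0 (funext fun i => norm_eq_zero.1 (congrFun h i))
  have hAz := hirr.mulVec_eq_smul_of_smul_le_mulVec hA (norm_nonneg μ) hsr hz hz0
    (Matrix.norm_smul_le_mulVec_norm hA hx)
  have hzpos := hirr.pos_of_mulVec_eq_smul hA (norm_nonneg μ) hz hz0 hAz
  have hzC : ∀ i, (‖x i‖ : ℂ) ≠ 0 := fun i => by exact_mod_cast (hzpos i).ne'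
  have hμC : (‖μ‖ : ℂ) ≠ 0 := by exact_mod_cast norm_ne_zero_iff.2 hμ
  have harc : ∀ i j, A i j ≠ 0 → x j / ‖x j‖ = μ / ‖μ‖ * (x i / ‖x i‖) := by
    intro i j hij
    rw [div_mul_div_comm, div_eq_div_iff (hzC j) (mul_ne_zero hμC (hzC i))]
    linear_combination Matrix.mul_norm_eq_of_mulVec_norm_eq hA hx hAz hij
  exact (mul_eq_right₀ (div_ne_zero (norm_ne_zero_iff.1 (hzpos i).ne') (hzC i))).1
    (hk.eq_pow_mul harc).symm

end MatIrreducible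

theorem stmt_7 {n : ℕ} (A : Matrix (Fin n) (Fin n) ℝ)
    (hnn : ∀ i j, 0 ≤ A i j) (hirr : MatIrreducible A)
    (p : ℕ) (hp : IsPeriod A p)
    (lam : ℂ) (hmem : lam ∈ spec A) (hlam : ‖lam‖ = specRadius A) :
    ∃ k : ℕ, k ≤ 2 * p - 1 ∧
      lam = (specRadius A : ℂ) * Complex.exp (Complex.I * Real.pi * k / p) := by
  obtain ⟨x, hx0, hx⟩ := exists_mulVec_eq_smul_of_mem_spec hmem
  rcases eq_or_ne lam 0 with rfl | hlam0
  · exact ⟨0, Nat.zero_le _, by simp [← hlam]⟩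
  obtain ⟨i, j, hij⟩ : ∃ i j, A i j ≠ 0 := by
    by_contra! h0
    have : A.map ((↑) : ℝ → ℂ) = 0 := by ext i j; simp [h0]
    rw [this, Matrix.zero_mulVec, eq_comm, smul_eq_zero] at hx
    exact hx.elim hlam0 hx0
  obtain ⟨m, hm⟩ := hirr.exists_hasWalk_self hij
  have hp0 := hp.pos hm
  have hsr := hlam ▸ spectralRadius_le_specRadius A
  have hroot : (lam / ‖lam‖) ^ p = 1 := orderOf_dvd_iff_pow_eq_one.1 <|
    hp.2 (orderOf (lam / ‖lam‖)) fun k _ ⟨_, hk⟩ =>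
      orderOf_dvd_of_pow_eq_one (hirr.pow_eq_one_of_hasWalk hnn hlam0 hx0 hx hsr hk)
  have := NeZero.of_pos hp0
  obtain ⟨l, hl, hexp⟩ := (Complex.isPrimitiveRoot_exp p hp0.ne').eq_pow_of_pow_eq_one hroot
  refine ⟨2 * l, by omega, ?_⟩
  have hphase : Complex.exp (Complex.I * Real.pi * (2 * l : ℕ) / p) = lam / ‖lam‖ := by
    rw [← hexp, ← Complex.exp_nat_mul]
    congr 1
    push_cast
    ring
  rw [← hlam, hphase, mul_div_cancel₀ _ (by exact_mod_cast norm_ne_zero_iff.2 hlam0)]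
end

section
/- Let p > 1 and let A = Cyc(A₁,…,A_p) be a nonnegative p-cyclic real matrix, where A_i is an r_i × r_{i+1} matrix for i = 1,…,p−1 and A_p is an r_p × r_1 matrix, and let Ã be the matrix obtained from A by replacing the block A_p by −A_p. Then for every odd integer k with 0 ≤ k ≤ 2p−1, there exists an invertible complex diagonal matrix L whose diagonal entries all have modulus 1 such that e^{iπk/p}·L A L⁻¹ = Ã; in particular sp(Ã) = e^{iπk/p}·sp(A). -/
open Matrix

/-- The `p`-cyclic block matrix `Cyc(A₁, …, A_p)`: the `(i, i+1)` block (indices mod `p`,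
so including the `(p, 1)` block) is `Ab i`, and all other blocks vanish. -/
def cyc {p : ℕ} [NeZero p] (r : Fin p → ℕ)
    (Ab : ∀ i : Fin p, Matrix (Fin (r i)) (Fin (r (i + 1))) ℝ) :
    Matrix ((i : Fin p) × Fin (r i)) ((i : Fin p) × Fin (r i)) ℝ :=
  fun x y => if h : y.1 = x.1 + 1 then Ab x.1 x.2 (Fin.cast (congrArg r h) y.2) else 0

/-! With `ω = exp (iπk/p)` we have `ω ^ p = exp (iπk) = -1` because `k` is odd. Conjugating by the
diagonal matrix that is `ω ^ j` on the `j`-th block multiplies the block `(j, j + 1)` by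
`ω ^ j / ω ^ (j + 1)`, so after scaling by `ω` every block is unchanged except the wrap-around
block `(p - 1, 0)`, which is multiplied by `ω ^ p = -1`. Spectra are invariant under similarity
and scale with the matrix. -/

theorem Matrix.charpoly_smul {K n : Type*} [Field K] [Infinite K] [Fintype n] [DecidableEq n]
    (M : Matrix n n K) {c : K} (hc : c ≠ 0) :
    (c • M).charpoly = M.charpoly.scaleRoots c := by
  refine Polynomial.funext fun x => ?_
  have hx : x = c * (c⁻¹ * x) := (mul_inv_cancel_left₀ hc x).symm
  rw [eval_charpoly, hx, Polynomial.scaleRoots_eval_mul, charpoly_natDegree_eq_dim, eval_charpoly,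
    ← det_smul, smul_sub, map_mul, scalar_apply c, ← smul_eq_diagonal_mul]

theorem Matrix.roots_charpoly_smul {K n : Type*} [Field K] [IsAlgClosed K] [Fintype n]
    [DecidableEq n] (M : Matrix n n K) {c : K} (hc : c ≠ 0) :
    (c • M).charpoly.roots = M.charpoly.roots.map (c * ·) := by
  rw [charpoly_smul M hc, Polynomial.roots_scaleRoots _ (isUnit_iff_ne_zero.2 hc)]

theorem Matrix.charpoly_diagonal_conj {K n : Type*} [Field K] [Fintype n] [DecidableEq n]
    {d : n → K} (hd : ∀ i, d i ≠ 0) (M : Matrix n n K) :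
    (diagonal d * M * (diagonal d)⁻¹).charpoly = M.charpoly := by
  have hD : IsUnit (diagonal d) := isUnit_diagonal.2 (Pi.isUnit_iff.2 fun i => (hd i).isUnit)
  simpa [coe_units_inv] using charpoly_units_conj hD.unit M

theorem Complex.exp_I_mul_pi_mul_div_pow_of_odd {k : ℕ} (hk : Odd k) {p : ℕ} (hp : p ≠ 0) :
    exp (I * Real.pi * k / p) ^ p = -1 := by
  rw [← exp_nat_mul, show (p : ℂ) * (I * Real.pi * k / p) = k * (Real.pi * I) by
    field_simp, exp_nat_mul, exp_pi_mul_I, hk.neg_one_pow]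

theorem mul_pow_val_div_pow_val_succ {K : Type*} [Field K] {p : ℕ} [NeZero p] {ω : K}
    (hω : ω ^ p = -1) (j : Fin p) :
    ω * ω ^ (j : ℕ) / ω ^ ((j + 1 : Fin p) : ℕ) = if (j : ℕ) = p - 1 then -1 else 1 := by
  have hω0 : ω ≠ 0 := by
    rintro rfl
    simp [zero_pow (NeZero.ne p)] at hω
  rw [← pow_succ', Fin.val_add, Fin.val_one', Nat.add_mod_mod]
  split_ifs with hj
  · rw [hj, Nat.sub_add_cancel NeZero.one_le, Nat.mod_self, pow_zero, div_one, hω]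
  · rw [Nat.mod_eq_of_lt (by omega), div_self (pow_ne_zero _ hω0)]

theorem smul_diagonal_conj_cyc {p : ℕ} [NeZero p] (r : Fin p → ℕ)
    (Ab : ∀ i : Fin p, Matrix (Fin (r i)) (Fin (r (i + 1))) ℝ) {c : ℂ} {e : Fin p → ℂ} (he : ∀ i, e i ≠ 0) {s : Fin p → ℝ}
    (hs : ∀ i, c * e i / e (i + 1) = s i) :
    c • (diagonal (fun v => e v.1) * (cyc r Ab).map Complex.ofReal *
      (diagonal (fun v => e v.1))⁻¹) = (cyc r fun i => s i • Ab i).map Complex.ofReal := by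
  have hinv : (diagonal fun v : (i : Fin p) × Fin (r i) => e v.1)⁻¹ =
      diagonal fun v => (e v.1)⁻¹ :=
    inv_eq_right_inv (by simp [diagonal_mul_diagonal, he])
  ext x y
  simp only [hinv, Matrix.smul_apply, diagonal_mul, mul_diagonal, map_apply, cyc]
  split_ifs with h
  · simp only [congrArg e h, smul_eq_mul, Complex.ofReal_mul, ← hs]
    ring
  · simp

theorem stmt_10 {p : ℕ} [NeZero p] (hp : 1 < p) (r : Fin p → ℕ)
    (Ab : ∀ i : Fin p, Matrix (Fin (r i)) (Fin (r (i + 1))) ℝ)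
    (k : ℕ) (hko : Odd k) :
    (∃ d : ((i : Fin p) × Fin (r i)) → ℂ, (∀ v, ‖d v‖ = 1) ∧
      Complex.exp (Complex.I * Real.pi * k / p) •
        (Matrix.diagonal d * (cyc r Ab).map Complex.ofReal * (Matrix.diagonal d)⁻¹) =
        (cyc r (fun i => if i = (⟨p - 1, by omega⟩ : Fin p) then -(Ab i) else Ab i)).map
          Complex.ofReal) ∧
    spec (cyc r (fun i => if i = (⟨p - 1, by omega⟩ : Fin p) then -(Ab i) else Ab i)) =
      (spec (cyc r Ab)).map (fun z => Complex.exp (Complex.I * Real.pi * k / p) * z) := by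
  set ω := Complex.exp (Complex.I * Real.pi * k / p)
  have hω : ω ^ p = -1 := Complex.exp_I_mul_pi_mul_div_pow_of_odd hko (NeZero.ne p)
  have hω0 : ω ≠ 0 := Complex.exp_ne_zero _
  have hsign : (fun i => if i = (⟨p - 1, by omega⟩ : Fin p) then -(Ab i) else Ab i) =
      fun i : Fin p => (if (i : ℕ) = p - 1 then -1 else 1 : ℝ) • Ab i := by
    funext i
    simp only [Fin.ext_iff]
    split_ifs <;> simp
  have hconj := smul_diagonal_conj_cyc r Ab (e := fun i => ω ^ (i : ℕ))
    (s := fun i => if (i : ℕ) = p - 1 then -1 else 1) (fun i => pow_ne_zero _ hω0) fun i => by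
      rw [mul_pow_val_div_pow_val_succ hω]
      split_ifs <;> simp
  rw [← hsign] at hconj
  refine ⟨⟨_, fun v => by simp [ω, Complex.norm_exp], hconj⟩, ?_⟩
  rw [spec, spec, ← hconj, Matrix.roots_charpoly_smul _ hω0,
    Matrix.charpoly_diagonal_conj fun v => pow_ne_zero _ hω0]
end

section
/- Let A be an n×n irreducible nonnegative real matrix with period p. Then for every even integer k with 0 ≤ k ≤ 2p−1, e^{iπk/p}·sp(A) = sp(A); consequently, for every odd integer k with 0 ≤ k ≤ 2p−1, e^{iπk/p}·sp(A) = e^{iπ/p}·sp(A). -/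
/-!
Fix a vertex `i₀`. Every closed walk has length divisible by `p`, so all walks from `i₀` to `i`
have the same length `c i` modulo `p`, and `c j = c i + 1` along every arc `i → j`. For a `p`-th
root of unity `ω = e^{2πi j/p}` the diagonal matrix `D = diag(ω^{c i})` then satisfies
`D⁻¹ A D = ω A`, so `A` and `ω A` have the same characteristic polynomial, whose roots are
`ω · sp(A)`. An even `k` gives `e^{iπk/p} = e^{2πi (k/2)/p}`; an odd `k` factors as
`e^{iπ/p} · e^{2πi ((k-1)/2)/p}`.
-/

open Matrix

section Walks

variable {ι : Type*} {A : Matrix ι ι ℝ}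

theorem HasWalk.append {i j l : ι} {a b : ℕ} (h₁ : HasWalk A i j a) (h₂ : HasWalk A j l b) :
    HasWalk A i l (a + b) := by
  obtain ⟨f, rfl, rfl, hf⟩ := h₁
  obtain ⟨g, hg0, rfl, hg⟩ := h₂
  set w : ℕ → ι := fun t => if t ≤ a then f t else g (t - a)
  have hw_left : ∀ t ≤ a, w t = f t := fun t ht => if_pos ht
  have hw_right : ∀ t, a ≤ t → w t = g (t - a) := fun t ht => by
    rcases ht.eq_or_lt with rfl | ht
    · simp [w, hg0]
    · exact if_neg ht.not_ge
  refine ⟨w, hw_left 0 (Nat.zero_le a), by simpa using hw_right (a + b) (by omega),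
    fun t ht => ?_⟩
  rcases lt_or_ge t a with hta | hat
  · rw [hw_left t hta.le, hw_left (t + 1) hta]
    exact hf t hta
  · rw [hw_right t hat, hw_right (t + 1) (by omega), show t + 1 - a = t - a + 1 by omega]
    exact hg (t - a) (by omega)

theorem hasWalk_one_of_ne_zero {i j : ι} (h : A i j ≠ 0) : HasWalk A i j 1 :=
  ⟨fun t => if t = 0 then i else j, rfl, rfl,
    fun t ht => by simpa [Nat.lt_one_iff.mp ht] using h⟩

end Walks

section CyclicLevels

variable {ι : Type*} {A : Matrix ι ι ℝ} {p : ℕ}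
  (hp : ∀ k, 0 < k → (∃ i, HasWalk A i i k) → p ∣ k)
include hp

theorem natCast_eq_zero_of_hasWalk_self {i : ι} {k : ℕ} (h : HasWalk A i i k) :
    (k : ZMod p) = 0 := by
  rcases k.eq_zero_or_pos with rfl | hk
  · exact Nat.cast_zero
  · exact (ZMod.natCast_eq_zero_iff k p).2 (hp k hk ⟨i, h⟩)

theorem natCast_eq_of_hasWalk (hirr : MatIrreducible A) {i j : ι} {x y : ℕ}
    (hx : HasWalk A i j x) (hy : HasWalk A i j y) : (x : ZMod p) = y := by
  obtain ⟨b, hb⟩ := hirr j i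
  have hxb := natCast_eq_zero_of_hasWalk_self hp (hx.append hb)
  have hyb := natCast_eq_zero_of_hasWalk_self hp (hy.append hb)
  push_cast at hxb hyb
  exact add_right_cancel (hxb.trans hyb.symm)

theorem exists_level_add_one_of_ne_zero (hirr : MatIrreducible A) :
    ∃ c : ι → ZMod p, ∀ i j, A i j ≠ 0 → c j = c i + 1 := by
  cases isEmpty_or_nonempty ι with
  | inl => exact ⟨isEmptyElim, fun i => isEmptyElim i⟩
  | inr =>
    obtain ⟨i₀⟩ := ‹Nonempty ι›
    choose len hlen using hirr i₀
    refine ⟨fun i => len i, fun i j hij => ?_⟩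
    simpa using
      natCast_eq_of_hasWalk hp hirr (hlen j) ((hlen i).append (hasWalk_one_of_ne_zero hij))

end CyclicLevels

namespace Matrix

variable {ι : Type*} [Fintype ι] [DecidableEq ι]

theorem charpoly_smul_s12 {K : Type*} [Field K] [Infinite K] (M : Matrix ι ι K) {s : K}
    (hs : s ≠ 0) : (s • M).charpoly = M.charpoly.scaleRoots s := by
  refine Polynomial.funext fun t => ?_
  have hscalar : scalar ι t - s • M = s • (scalar ι (t / s) - M) := by
    rw [smul_sub, scalar_apply, scalar_apply, ← diagonal_smul]
    congr
    ext
    exact (mul_div_cancel₀ t hs).symm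
  calc (s • M).charpoly.eval t = s ^ Fintype.card ι * M.charpoly.eval (t / s) := by
        rw [eval_charpoly, hscalar, det_smul, eval_charpoly]
    _ = (M.charpoly.scaleRoots s).eval (s * (t / s)) := by
        rw [Polynomial.scaleRoots_eval_mul, charpoly_natDegree_eq_dim]
    _ = (M.charpoly.scaleRoots s).eval t := by rw [mul_div_cancel₀ t hs]

theorem roots_charpoly_smul_s12 {K : Type*} [Field K] [IsAlgClosed K] (M : Matrix ι ι K) {s : K}
    (hs : s ≠ 0) : (s • M).charpoly.roots = M.charpoly.roots.map (s * ·) := by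
  rw [charpoly_smul_s12 M hs, Polynomial.roots_scaleRoots _ (isUnit_iff_ne_zero.mpr hs)]

theorem charpoly_eq_of_mul_diagonal_eq {R : Type*} [CommRing R] {M N : Matrix ι ι R}
    {d : ι → R} (hd : IsUnit d) (h : M * diagonal d = diagonal d * N) :
    N.charpoly = M.charpoly := by
  obtain ⟨u, hu⟩ := isUnit_diagonal.mpr hd
  have : N = u.val⁻¹ * M * u.val := by
    rw [Matrix.mul_assoc, hu, h, ← hu, ← Matrix.mul_assoc, ← coe_units_inv, u.inv_mul,
      Matrix.one_mul]
  rw [this, charpoly_units_conj']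

end Matrix

theorem spec_map_toCircle_mul {ι : Type*} [Fintype ι] [DecidableEq ι] {A : Matrix ι ι ℝ}
    {p : ℕ} [NeZero p] (hirr : MatIrreducible A)
    (hp : ∀ k, 0 < k → (∃ i, HasWalk A i i k) → p ∣ k) (j : ZMod p) :
    (spec A).map (fun z => (ZMod.toCircle j : ℂ) * z) = spec A := by
  obtain ⟨c, hc⟩ := exists_level_add_one_of_ne_zero hp hirr
  set M : Matrix ι ι ℂ := A.map Complex.ofReal
  set d : ι → ℂ := fun i => ZMod.toCircle (j * c i)
  have hconj : M * diagonal d = diagonal d * ((ZMod.toCircle j : ℂ) • M) := by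
    ext i k
    rw [mul_diagonal, diagonal_mul]
    by_cases hik : A i k = 0
    · simp [M, hik]
    · simp only [d, M, hc i k hik, mul_add, mul_one, AddChar.map_add_eq_mul, Circle.coe_mul,
        Matrix.smul_apply, map_apply, smul_eq_mul]
      ring
  have hd : IsUnit d := Pi.isUnit_iff.mpr fun i => (Circle.coe_ne_zero _).isUnit
  rw [spec, ← roots_charpoly_smul_s12 M (Circle.coe_ne_zero _),
    charpoly_eq_of_mul_diagonal_eq hd hconj]

theorem stmt_12_general {n : ℕ} (A : Matrix (Fin n) (Fin n) ℝ)
    (hirr : MatIrreducible A)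
    (p : ℕ) (hp : IsPeriod A p) :
    (∀ k : ℕ, k ≤ 2 * p - 1 → Even k →
      (spec A).map (fun z => Complex.exp (Complex.I * Real.pi * k / p) * z) = spec A) ∧
    (∀ k : ℕ, k ≤ 2 * p - 1 → Odd k →
      (spec A).map (fun z => Complex.exp (Complex.I * Real.pi * k / p) * z) =
        (spec A).map (fun z => Complex.exp (Complex.I * Real.pi / p) * z)) := by
  rcases p.eq_zero_or_pos with rfl | hp0
  · simp
  have : NeZero p := ⟨hp0.ne'⟩
  have hexp (m : ℕ) :
      Complex.exp (Complex.I * Real.pi * (2 * m) / p) = ZMod.toCircle (m : ZMod p) := by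
    rw [ZMod.toCircle_natCast]
    ring_nf
  have hrot (m : ℕ) :
      (spec A).map (fun z => Complex.exp (Complex.I * Real.pi * (2 * m) / p) * z) = spec A := by
    simpa only [hexp] using spec_map_toCircle_mul hirr hp.1 (m : ZMod p)
  refine ⟨fun k _ ⟨m, hk⟩ => ?_, fun k _ ⟨m, hk⟩ => ?_⟩
  · simpa [hk, ← two_mul] using hrot m
  · have hsplit : (fun z => Complex.exp (Complex.I * Real.pi * k / p) * z) =
        (fun z => Complex.exp (Complex.I * Real.pi / p) * z) ∘
          (fun z => Complex.exp (Complex.I * Real.pi * (2 * m) / p) * z) := by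
      funext z
      rw [Function.comp_apply, ← mul_assoc, ← Complex.exp_add, hk]
      push_cast
      ring_nf
    rw [hsplit, ← Multiset.map_map, hrot m]

theorem stmt_12 {n : ℕ} (A : Matrix (Fin n) (Fin n) ℝ)
    (hnn : ∀ i j, 0 ≤ A i j) (hirr : MatIrreducible A)
    (p : ℕ) (hp : IsPeriod A p) :
    (∀ k : ℕ, k ≤ 2 * p - 1 → Even k →
      (spec A).map (fun z => Complex.exp (Complex.I * Real.pi * k / p) * z) = spec A) ∧
    (∀ k : ℕ, k ≤ 2 * p - 1 → Odd k →
      (spec A).map (fun z => Complex.exp (Complex.I * Real.pi * k / p) * z) =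
        (spec A).map (fun z => Complex.exp (Complex.I * Real.pi / p) * z)) :=
  stmt_12_general A hirr p hp
end
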